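/- arXiv:2009.01234 — 2 statements merged into one kernel-verified Lean document; each statement's English description precedes it below -/
import Mathlib

section
/- Let (V,E) be a finite weighted connected graph that is a two-sided λ-spectral expander (i.e. ‖A(I−M)‖_{B(ℓ²(V,m))} ≤ λ) with 0 < λ < 1. Then for every 0 < θ ≤ 1 and every strictly θ-Hilbertian Banach space 𝔼, ‖(A(I−M)) ⊗ id_𝔼‖_{B(ℓ²(V,m;𝔼))} ≤ 2λ^θ. -/
noncomputable section

open scoped BigOperators

/-- Weighted `ℓ²`-norm squared of an `E`-valued function on a finite set `V`
with weight `m`: `Σ_v m(v)‖φ(v)‖²`. -/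
def wns {V : Type} [Fintype V] (m : V → ℝ) {E : Type} [NormedAddCommGroup E]
    (φ : V → E) : ℝ :=
  ∑ v, m v * ‖φ v‖ ^ 2

/-- The action of the matrix `T` on `E`-valued functions, i.e. `T ⊗ id_E`. -/
def matVec {V : Type} [Fintype V] {E : Type} [NormedAddCommGroup E] [NormedSpace ℂ E]
    (T : V → V → ℂ) (φ : V → E) : V → E :=
  fun v => ∑ u, T v u • φ u

/-- `‖T ⊗ id_E‖_{B(ℓ²(V,m;E))} ≤ C`. -/
def OpBound {V : Type} [Fintype V] (m : V → ℝ) (T : V → V → ℂ)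
    (E : Type) [NormedAddCommGroup E] [NormedSpace ℂ E] (C : ℝ) : Prop :=
  ∀ φ : V → E, wns m (matVec T φ) ≤ C ^ 2 * wns m φ

/-- Vertex weight `m(v) = Σ_{e ∋ v} m(e)` of the weighted graph with symmetric edge
weight function `w` (`w u v = m({u,v})`). -/
def deg {V : Type} [Fintype V] (w : V → V → ℝ) (v : V) : ℝ := ∑ u, w v u

/-- Matrix of the random walk operator `A`: `A_{v,u} = m({u,v})/m(v)`. -/
def rwA {V : Type} [Fintype V] (w : V → V → ℝ) : V → V → ℂ :=
  fun v u => ((w v u / deg w v : ℝ) : ℂ)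

/-- Matrix of the averaging projection `M` onto constants:
`M_{v,u} = m(u)/m(∅)` with `m(∅) = Σ_v m(v)`. -/
def avgM {V : Type} [Fintype V] (w : V → V → ℝ) : V → V → ℂ :=
  fun _ u => ((deg w u / ∑ x, deg w x : ℝ) : ℂ)

/-- Matrix of `A(I−M)`; since the rows of `A` sum to `1`, one has
`(A(I−M))_{v,u} = A_{v,u} − m(u)/m(∅)`. -/
def aim {V : Type} [Fintype V] (w : V → V → ℝ) : V → V → ℂ :=
  fun v u => rwA w v u - avgM w v u

/-- Operational characterization of a strictly `θ`-Hilbertian Banach space `E`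
(i.e. `E = [E₀,E₁]_θ` with `E₁` a Hilbert space), via the interpolation
inequality `‖T ⊗ id_{[E₀,E₁]_θ}‖ ≤ ‖T ⊗ id_{E₀}‖^{1−θ}‖T ⊗ id_{E₁}‖^{θ}`:
whenever a matrix `T` on a finite weighted set satisfies `‖T ⊗ id_F‖ ≤ C₀` for every
Banach space `F` and `‖T ⊗ id_H‖ ≤ C₁` for every Hilbert space `H`, then
`‖T ⊗ id_E‖ ≤ C₀^{1−θ} C₁^{θ}`. -/
def StrictlyThetaHilbertian (θ : ℝ) (E : Type) [NormedAddCommGroup E]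
    [NormedSpace ℂ E] : Prop :=
  ∀ (V : Type) [Fintype V] (m : V → ℝ), (∀ v, 0 < m v) →
    ∀ (T : V → V → ℂ) (C₀ C₁ : ℝ), 0 ≤ C₀ → 0 ≤ C₁ →
      (∀ (F : Type) [NormedAddCommGroup F] [NormedSpace ℂ F] [CompleteSpace F],
        OpBound m T F C₀) →
      (∀ (H : Type) [NormedAddCommGroup H] [InnerProductSpace ℂ H] [CompleteSpace H],
        OpBound m T H C₁) →
      OpBound m T E (C₀ ^ (1 - θ) * C₁ ^ θ)


lemma wns_nonneg {V : Type} [Fintype V] {m : V → ℝ} (hm : ∀ v, 0 ≤ m v)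
    {E : Type} [NormedAddCommGroup E] (φ : V → E) : 0 ≤ wns m φ :=
  Finset.sum_nonneg fun v _ => mul_nonneg (hm v) (sq_nonneg _)

-- Jensen / Cauchy-Schwarz for convex combinations
lemma jensen_sq {V : Type} [Fintype V] {F : Type} [NormedAddCommGroup F] [NormedSpace ℂ F]
    (p : V → ℝ) (hp : ∀ u, 0 ≤ p u) (φ : V → F) :
    ‖∑ u, ((p u : ℝ) : ℂ) • φ u‖ ^ 2 ≤ (∑ u, p u) * ∑ u, p u * ‖φ u‖ ^ 2 := by
  have h1 : ‖∑ u, ((p u : ℝ) : ℂ) • φ u‖ ≤ ∑ u, p u * ‖φ u‖ := by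
    calc ‖∑ u, ((p u : ℝ) : ℂ) • φ u‖ ≤ ∑ u, ‖((p u : ℝ) : ℂ) • φ u‖ :=
          norm_sum_le _ _
      _ = ∑ u, p u * ‖φ u‖ := by
          refine Finset.sum_congr rfl fun u _ => ?_
          rw [norm_smul, Complex.norm_real, Real.norm_eq_abs, abs_of_nonneg (hp u)]
  have h2 : (∑ u, p u * ‖φ u‖) ^ 2 ≤ (∑ u, p u) * ∑ u, p u * ‖φ u‖ ^ 2 := by
    have := Finset.sum_mul_sq_le_sq_mul_sq Finset.univ (fun u => Real.sqrt (p u))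
        (fun u => Real.sqrt (p u) * ‖φ u‖)
    have e1 : ∀ u : V, Real.sqrt (p u) * (Real.sqrt (p u) * ‖φ u‖) = p u * ‖φ u‖ := by
      intro u; rw [← mul_assoc, Real.mul_self_sqrt (hp u)]
    have e2 : ∀ u : V, Real.sqrt (p u) ^ 2 = p u := fun u => Real.sq_sqrt (hp u)
    have e3 : ∀ u : V, (Real.sqrt (p u) * ‖φ u‖) ^ 2 = p u * ‖φ u‖ ^ 2 := by
      intro u; rw [mul_pow, e2]
    simpa [e1, e2, e3] using this
  have hnn : (0:ℝ) ≤ ∑ u, p u * ‖φ u‖ :=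
    Finset.sum_nonneg fun u _ => mul_nonneg (hp u) (norm_nonneg _)
  calc ‖∑ u, ((p u : ℝ) : ℂ) • φ u‖ ^ 2 ≤ (∑ u, p u * ‖φ u‖) ^ 2 :=
        pow_le_pow_left₀ (norm_nonneg _) h1 2
    _ ≤ _ := h2

lemma opBound_banach {V : Type} [Fintype V] [Nonempty V] (w : V → V → ℝ)
    (hsymm : ∀ u v, w u v = w v u) (hnn : ∀ u v, 0 ≤ w u v)
    (hdeg : ∀ v, 0 < deg w v)
    (F : Type) [NormedAddCommGroup F] [NormedSpace ℂ F] :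
    OpBound (deg w) (aim w) F 2 := by
  intro φ
  have hS : (0:ℝ) < ∑ x, deg w x := Finset.sum_pos (fun x _ => hdeg x) Finset.univ_nonempty
  set A : V → F := matVec (rwA w) φ with hA
  set B : V → F := matVec (avgM w) φ with hB
  have hsplit : ∀ v, matVec (aim w) φ v = A v - B v := by
    intro v
    simp only [matVec, aim, sub_smul, Finset.sum_sub_distrib, hA, hB]
  -- bound on A
  have hAv : ∀ v, ‖A v‖ ^ 2 ≤ ∑ u, (w v u / deg w v) * ‖φ u‖ ^ 2 := by
    intro v
    have hsum : ∑ u, w v u / deg w v = 1 := by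
      rw [← Finset.sum_div]; exact div_self (hdeg v).ne'
    have := jensen_sq (fun u => w v u / deg w v)
      (fun u => div_nonneg (hnn v u) (hdeg v).le) φ
    rw [hsum, one_mul] at this
    simpa [hA, matVec, rwA] using this
  have hBv : ∀ v, ‖B v‖ ^ 2 ≤ ∑ u, (deg w u / ∑ x, deg w x) * ‖φ u‖ ^ 2 := by
    intro v
    have hsum : ∑ u, deg w u / ∑ x, deg w x = 1 := by
      rw [← Finset.sum_div]; exact div_self hS.ne'
    have := jensen_sq (fun u => deg w u / ∑ x, deg w x)
      (fun u => div_nonneg (hdeg u).le hS.le) φ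
    rw [hsum, one_mul] at this
    simpa [hB, matVec, avgM] using this
  -- summed bounds
  have sumA : ∑ v, deg w v * ∑ u, (w v u / deg w v) * ‖φ u‖ ^ 2 = wns (deg w) φ := by
    have : ∀ v, deg w v * ∑ u, (w v u / deg w v) * ‖φ u‖ ^ 2
        = ∑ u, w v u * ‖φ u‖ ^ 2 := by
      intro v
      rw [Finset.mul_sum]
      refine Finset.sum_congr rfl fun u _ => ?_
      rw [div_mul_eq_mul_div, ← mul_div_assoc]
      exact mul_div_cancel_left₀ _ (hdeg v).ne'
    rw [Finset.sum_congr rfl fun v _ => this v, Finset.sum_comm]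
    unfold wns deg
    refine Finset.sum_congr rfl fun u _ => ?_
    rw [← Finset.sum_mul]
    congr 1
    exact Finset.sum_congr rfl fun v _ => hsymm v u
  have sumB : ∑ v, deg w v * ∑ u, (deg w u / ∑ x, deg w x) * ‖φ u‖ ^ 2
      = wns (deg w) φ := by
    rw [← Finset.sum_mul]
    unfold wns
    rw [Finset.mul_sum]
    refine Finset.sum_congr rfl fun u _ => ?_
    field_simp

  calc wns (deg w) (matVec (aim w) φ)
      ≤ ∑ v, deg w v * (2 * ‖A v‖ ^ 2 + 2 * ‖B v‖ ^ 2) := by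
        refine Finset.sum_le_sum fun v _ => ?_
        refine mul_le_mul_of_nonneg_left ?_ (hdeg v).le
        rw [hsplit v]
        have h := norm_sub_le (A v) (B v)
        nlinarith [norm_nonneg (A v), norm_nonneg (B v), norm_nonneg (A v - B v),
          sq_nonneg (‖A v‖ - ‖B v‖), mul_self_le_mul_self (norm_nonneg (A v - B v)) h]
    _ = 2 * ∑ v, deg w v * ‖A v‖ ^ 2 + 2 * ∑ v, deg w v * ‖B v‖ ^ 2 := by
        rw [Finset.mul_sum, Finset.mul_sum, ← Finset.sum_add_distrib]
        exact Finset.sum_congr rfl fun v _ => by ring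
    _ ≤ 2 * wns (deg w) φ + 2 * wns (deg w) φ := by
        have h1 : ∑ v, deg w v * ‖A v‖ ^ 2 ≤ wns (deg w) φ := by
          rw [← sumA]
          exact Finset.sum_le_sum fun v _ =>
            mul_le_mul_of_nonneg_left (hAv v) (hdeg v).le
        have h2 : ∑ v, deg w v * ‖B v‖ ^ 2 ≤ wns (deg w) φ := by
          rw [← sumB]
          exact Finset.sum_le_sum fun v _ =>
            mul_le_mul_of_nonneg_left (hBv v) (hdeg v).le
        linarith
    _ = 2 ^ 2 * wns (deg w) φ := by ring

lemma opBound_euclidean {V : Type} [Fintype V] (m : V → ℝ) (T : V → V → ℂ) (C : ℝ)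
    (h : OpBound m T ℂ C) (hm : ∀ v, 0 ≤ m v)
    (ι : Type) [Fintype ι] : OpBound m T (EuclideanSpace ℂ ι) C := by
  intro Φ
  have happ : ∀ (ψ : V → EuclideanSpace ℂ ι) (v : V) (i : ι),
      matVec T ψ v i = matVec T (fun u => ψ u i) v := by
    intro ψ v i
    show (∑ u, T v u • ψ u) i = _
    calc (∑ u, T v u • ψ u) i
        = (EuclideanSpace.proj (𝕜 := ℂ) i) (∑ u, T v u • ψ u) := rfl
      _ = ∑ u, T v u * ψ u i := by rw [map_sum]; simp [smul_eq_mul]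
      _ = _ := by simp [matVec]
  have hnorm : ∀ (x : EuclideanSpace ℂ ι), ‖x‖ ^ 2 = ∑ i, ‖x i‖ ^ 2 := by
    intro x
    rw [EuclideanSpace.norm_eq, Real.sq_sqrt]
    exact Finset.sum_nonneg fun i _ => sq_nonneg _
  calc wns m (matVec T Φ)
      = ∑ i, ∑ v, m v * ‖matVec T (fun u => Φ u i) v‖ ^ 2 := by
        unfold wns
        rw [Finset.sum_comm]
        refine Finset.sum_congr rfl fun v _ => ?_
        rw [hnorm, Finset.mul_sum]
        exact Finset.sum_congr rfl fun i _ => by rw [happ]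
    _ ≤ ∑ i : ι, C ^ 2 * wns m (fun u => Φ u i) := Finset.sum_le_sum fun i _ => h _
    _ = C ^ 2 * wns m Φ := by
        rw [← Finset.mul_sum]
        congr 1
        unfold wns
        rw [Finset.sum_comm]
        refine Finset.sum_congr rfl fun v _ => ?_
        rw [hnorm, Finset.mul_sum]

lemma opBound_hilbert {V : Type} [Fintype V] (m : V → ℝ) (T : V → V → ℂ) (C : ℝ)
    (h : OpBound m T ℂ C) (hm : ∀ v, 0 ≤ m v)
    (H : Type) [NormedAddCommGroup H] [InnerProductSpace ℂ H] : OpBound m T H C := by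
  intro φ
  set K := Submodule.span ℂ (Set.range φ) with hK
  haveI : FiniteDimensional ℂ K := FiniteDimensional.span_of_finite ℂ (Set.finite_range φ)
  set b := stdOrthonormalBasis ℂ K with hb
  set ψ : V → K := fun v => ⟨φ v, Submodule.subset_span (Set.mem_range_self v)⟩ with hψ
  set Φ : V → EuclideanSpace ℂ (Fin (Module.finrank ℂ K)) := fun v => b.repr (ψ v) with hΦ
  have hM1 : ∀ v, ((matVec T ψ v : K) : H) = matVec T φ v := by
    intro v; simp [matVec, hψ]
  have hM2 : ∀ v, matVec T Φ v = b.repr (matVec T ψ v) := by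
    intro v; simp [matVec, hΦ, map_sum, map_smul]
  have e1 : wns m (matVec T φ) = wns m (matVec T Φ) := by
    unfold wns
    refine Finset.sum_congr rfl fun v _ => ?_
    rw [hM2, b.repr.norm_map, ← hM1 v]
    rfl
  have e2 : wns m Φ = wns m φ := by
    unfold wns
    refine Finset.sum_congr rfl fun v _ => ?_
    rw [hΦ]
    simp only [b.repr.norm_map]
    rfl
  rw [e1, ← e2]
  exact opBound_euclidean m T C h hm _ Φ

/-- If a finite weighted connected graph is a two-sided
`λ`-spectral expander (`‖A(I−M)‖_{ℓ²(V,m)} ≤ λ`, `0 < λ < 1`), then for every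
`0 < θ ≤ 1` and every strictly `θ`-Hilbertian Banach space `E`,
`‖(A(I−M)) ⊗ id_E‖_{B(ℓ²(V,m;E))} ≤ 2λ^θ`. -/
theorem stmt4 {V : Type} [Fintype V] (w : V → V → ℝ)
    (hsymm : ∀ u v, w u v = w v u) (hnn : ∀ u v, 0 ≤ w u v)
    (hdeg : ∀ v, 0 < deg w v)
    (hconn : (SimpleGraph.fromRel fun u v => w u v ≠ 0).Connected)
    (lam : ℝ) (hlam0 : 0 < lam) (hlam1 : lam < 1)
    (hexp : OpBound (deg w) (aim w) ℂ lam)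
    (θ : ℝ) (hθ0 : 0 < θ) (hθ1 : θ ≤ 1)
    (E : Type) [NormedAddCommGroup E] [NormedSpace ℂ E] [CompleteSpace E]
    (hE : StrictlyThetaHilbertian θ E) :
    OpBound (deg w) (aim w) E (2 * lam ^ θ) := by
  haveI : Nonempty V := hconn.nonempty
  have hBanach : ∀ (F : Type) [NormedAddCommGroup F] [NormedSpace ℂ F] [CompleteSpace F],
      OpBound (deg w) (aim w) F 2 := fun F _ _ _ => opBound_banach w hsymm hnn hdeg F
  have hHilbert : ∀ (H : Type) [NormedAddCommGroup H] [InnerProductSpace ℂ H]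
      [CompleteSpace H], OpBound (deg w) (aim w) H lam := fun H _ _ _ =>
    opBound_hilbert (deg w) (aim w) lam hexp (fun v => (hdeg v).le) H
  have h := hE V (deg w) hdeg (aim w) 2 lam (by norm_num) hlam0.le hBanach hHilbert
  intro φ
  refine (h φ).trans ?_
  refine mul_le_mul_of_nonneg_right ?_ (wns_nonneg (fun v => (hdeg v).le) φ)
  have h2 : (2:ℝ) ^ (1 - θ) ≤ 2 := by
    calc (2:ℝ) ^ (1 - θ) ≤ (2:ℝ) ^ (1:ℝ) :=
          Real.rpow_le_rpow_of_exponent_le one_le_two (by linarith)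
      _ = 2 := Real.rpow_one 2
  have hl : (0:ℝ) ≤ lam ^ θ := Real.rpow_nonneg hlam0.le θ
  have hmul : (2:ℝ) ^ (1 - θ) * lam ^ θ ≤ 2 * lam ^ θ :=
    mul_le_mul_of_nonneg_right h2 hl
  have hnn2 : (0:ℝ) ≤ (2:ℝ) ^ (1 - θ) * lam ^ θ :=
    mul_nonneg (Real.rpow_nonneg (by norm_num) _) hl
  exact pow_le_pow_left₀ hnn2 hmul 2
end
end

section
/- In the setup of Garland's method, for 1 ≤ k ≤ n−1, φ ∈ C^k(X,π) and ψ ∈ C^k(X,π̄), the adjoint differentials satisfy ⟨d̄*_{k−1}φ, d*_{k−1}ψ⟩ = (1/k!) Σ_{τ ∈ Σ(k−1,Γ)} (1/|Γ_τ|) ⟨(M_τ ⊗ id_𝔼) φ_τ, ψ_τ⟩_τ, where M_τ is the averaging projection onto constants on ℓ²(V_τ, m_τ). -/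
noncomputable section

open scoped BigOperators Classical

/-! ## Garland's setup: a locally finite pure `n`-dimensional simplicial complex `X`
(a downward-closed set `K` of finsets of the vertex type `V`), a locally compact
unimodular group `Γ` (with Haar measure `μ`) acting on `X` cocompactly (finitely
many orbits of simplices, witnessed by finite sets of orbit representatives) and
properly (stabilizers of simplices have finite positive Haar measure), and a
continuous isometric representation `π` of `Γ` on a Banach space `E`. -/

/-- Simplices of `K` of cardinality `j` containing `σ`. -/
def cofacesCard {V : Type} (K : Set (Finset V)) (σ : Finset V) (j : ℕ) :
    Set (Finset V) :=
  {η : Finset V | η ∈ K ∧ σ ⊆ η ∧ η.card = j}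

/-- The standard weight of a pure `n`-dimensional weighted simplicial complex. -/
structure IsStdWeight {V : Type} (K : Set (Finset V)) (n : ℕ) (m : Finset V → ℝ) :
    Prop where
  top_eq : ∀ σ ∈ K, σ.card = n + 1 → m σ = 1
  rec_eq : ∀ τ, τ ∈ K → ∀ k : ℕ, k < n → τ.card = k + 1 →
    ∀ h : (cofacesCard K τ (k + 2)).Finite, m τ = ∑ η ∈ h.toFinset, m η

/-- Ordered `k`-simplices of the complex `K`: injective `(k+1)`-tuples of vertices
spanning a simplex of `K`. -/
def OSimp {V : Type} [DecidableEq V] (K : Set (Finset V)) (k : ℕ) :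
    Set (Fin (k + 1) → V) :=
  {σ | Function.Injective σ ∧ Finset.image σ Finset.univ ∈ K}

/-- The underlying (unordered) simplex of an ordered simplex. -/
def simplexOf {V : Type} [DecidableEq V] {k : ℕ} (σ : Fin (k + 1) → V) : Finset V :=
  Finset.image σ Finset.univ

/-- The action of `g ∈ Γ` on ordered simplices. -/
def gAct {V Γ : Type} [Group Γ] [MulAction Γ V] (g : Γ) {k : ℕ}
    (σ : Fin (k + 1) → V) : Fin (k + 1) → V :=
  fun i => g • σ i

/-- The pointwise stabilizer of an ordered simplex. -/
def stabSet {V Γ : Type} [Group Γ] [MulAction Γ V] {k : ℕ}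
    (σ : Fin (k + 1) → V) : Set Γ :=
  {g : Γ | gAct g σ = σ}

/-- `|Γ_σ|`: the Haar measure of the pointwise stabilizer of `σ`. -/
def stabVol {V Γ : Type} [Group Γ] [MulAction Γ V] [MeasurableSpace Γ]
    (μ : MeasureTheory.Measure Γ) {k : ℕ} (σ : Fin (k + 1) → V) : ℝ :=
  (μ (stabSet σ)).toReal

/-- `R` is a set of representatives for the `Γ`-orbits on `Σ(k)`, i.e. `Σ(k,Γ)`
(a finite such set witnesses cocompactness of the action). -/
def IsReps {V : Type} (Γ : Type) [Group Γ] [MulAction Γ V] [DecidableEq V]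
    (K : Set (Finset V)) (k : ℕ) (R : Finset (Fin (k + 1) → V)) : Prop :=
  (∀ τ ∈ R, τ ∈ OSimp K k) ∧
    ∀ σ ∈ OSimp K k, ∃! τ, τ ∈ R ∧ ∃ g : Γ, gAct g τ = σ

/-- A cochain is alternating. -/
def IsAlternating {V E : Type} [AddCommGroup E] {k : ℕ}
    (φ : (Fin (k + 1) → V) → E) : Prop :=
  ∀ (σ : Fin (k + 1) → V) (γ : Equiv.Perm (Fin (k + 1))),
    φ (σ ∘ γ) = (Equiv.Perm.sign γ : ℤ) • φ σ

/-- A cochain is `Γ`-equivariant (w.r.t. the representation `π`). -/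
def IsEquivariant {V Γ E : Type} [Group Γ] [MulAction Γ V]
    [NormedAddCommGroup E] [NormedSpace ℂ E] (π : Γ →* (E →L[ℂ] E)) {k : ℕ}
    (φ : (Fin (k + 1) → V) → E) : Prop :=
  ∀ (g : Γ) (σ : Fin (k + 1) → V), φ (gAct g σ) = π g (φ σ)

/-- A dual cochain is `Γ`-equivariant w.r.t. the dual representation
`π̄(g) = (π(g⁻¹))*`. -/
def IsDualEquivariant {V Γ E : Type} [Group Γ] [MulAction Γ V]
    [NormedAddCommGroup E] [NormedSpace ℂ E] (π : Γ →* (E →L[ℂ] E)) {k : ℕ}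
    (ψ : (Fin (k + 1) → V) → StrongDual ℂ E) : Prop :=
  ∀ (g : Γ) (σ : Fin (k + 1) → V), ψ (gAct g σ) = (ψ σ).comp (π g⁻¹)

/-- The simplicial differential `(d_kφ)(σ) = Σ_i (−1)^i φ(σ_i)`. -/
def diff {V E : Type} [AddCommGroup E] {k : ℕ} (φ : (Fin (k + 1) → V) → E) :
    (Fin (k + 2) → V) → E :=
  fun σ => ∑ i : Fin (k + 2), ((-1 : ℤ) ^ (i : ℕ)) • φ (σ ∘ i.succAbove)

/-- The squared norm `‖φ‖² = Σ_{σ∈Σ(k,Γ)} m(σ)/((k+1)!|Γ_σ|) ‖φ(σ)‖²` of a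
`k`-cochain. -/
def coNormSq {V Γ E : Type} [DecidableEq V] [Group Γ] [MulAction Γ V]
    [MeasurableSpace Γ] [NormedAddCommGroup E] (μ : MeasureTheory.Measure Γ)
    (m : Finset V → ℝ) {k : ℕ} (R : Finset (Fin (k + 1) → V))
    (φ : (Fin (k + 1) → V) → E) : ℝ :=
  ∑ σ ∈ R, m (simplexOf σ) / ((k + 1).factorial * stabVol μ σ) * ‖φ σ‖ ^ 2

/-- The coupling `⟨φ,ψ⟩ = Σ_{σ∈Σ(k,Γ)} m(σ)/((k+1)!|Γ_σ|) (φ(σ),ψ(σ))` between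
`k`-cochains and dual `k`-cochains. -/
def coPair {V Γ E : Type} [DecidableEq V] [Group Γ] [MulAction Γ V]
    [MeasurableSpace Γ] [NormedAddCommGroup E] [NormedSpace ℂ E]
    (μ : MeasureTheory.Measure Γ) (m : Finset V → ℝ) {k : ℕ}
    (R : Finset (Fin (k + 1) → V)) (φ : (Fin (k + 1) → V) → E)
    (ψ : (Fin (k + 1) → V) → StrongDual ℂ E) : ℂ :=
  ∑ σ ∈ R, ((m (simplexOf σ) / ((k + 1).factorial * stabVol μ σ) : ℝ) : ℂ) *
    ψ σ (φ σ)

/-- Edge weight `m_τ({u,v}) = m(τ ∪ {u,v})` of the 1-skeleton of the link of the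
simplex `t` (zero if `{u,v}` is not an edge of the link). -/
def linkW {V : Type} [DecidableEq V] (K : Set (Finset V)) (m : Finset V → ℝ)
    (t : Finset V) (u v : V) : ℝ :=
  if u ≠ v ∧ u ∉ t ∧ v ∉ t ∧ insert u (insert v t) ∈ K then
    m (insert u (insert v t)) else 0

/-- The adjoint differential
`(d*_kφ)(τ) = Σ_{v : vτ ∈ Σ(k+1)} (m(vτ)/m(τ)) φ(vτ)`, where `L τ` is the vertex
set of the link of `τ`. -/
def codiffOp {V F : Type} [DecidableEq V] [NormedAddCommGroup F] [NormedSpace ℂ F]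
    (m : Finset V → ℝ) {j : ℕ} (L : (Fin (j + 1) → V) → Finset V)
    (φ : (Fin (j + 2) → V) → F) : (Fin (j + 1) → V) → F :=
  fun τ => ∑ v ∈ L τ,
    ((m (insert v (simplexOf τ)) / m (simplexOf τ) : ℝ) : ℂ) • φ (Fin.cons v τ)

/-! The value `(d*φ)(τ)` is the `m_τ`-weighted mean of the localization `φ_τ`, i.e. the
constant value of `M_τ φ_τ`. Hence the `τ`-term of `⟨d̄*φ, d*ψ⟩` is
`m(τ)/(k!|Γ_τ|) · (d*ψ)(τ)((d*φ)(τ))`, and the factor `m(τ)` cancels the denominators of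
`(d*ψ)(τ)`, leaving `(1/(k!|Γ_τ|)) Σ_v m_τ(v) ψ_τ(v)((M_τ φ_τ)(v))`. -/

section

variable {V E : Type} [DecidableEq V] [NormedAddCommGroup E] [NormedSpace ℂ E]
  (m : Finset V → ℝ) {j : ℕ} (L : (Fin (j + 1) → V) → Finset V)

theorem codiffOp_apply_apply (ψ : (Fin (j + 2) → V) → StrongDual ℂ E)
    (τ : Fin (j + 1) → V) (x : E) :
    codiffOp m L ψ τ x = ∑ v ∈ L τ,
      ((m (insert v (simplexOf τ)) / m (simplexOf τ) : ℝ) : ℂ) * ψ (Fin.cons v τ) x := by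
  simp only [codiffOp, sum_apply, smul_apply, smul_eq_mul]

theorem codiffOp_eq_zero_of_weight_eq_zero (φ : (Fin (j + 2) → V) → E)
    {τ : Fin (j + 1) → V} (hτ : m (simplexOf τ) = 0) : codiffOp m L φ τ = 0 := by
  simp [codiffOp, hτ]

/-- If `m(τ) = 0`, then `d*φ(τ) = 0` because division by zero gives zero, so both sides
vanish. -/
theorem weight_mul_codiffOp_apply_codiffOp (φ : (Fin (j + 2) → V) → E)
    (ψ : (Fin (j + 2) → V) → StrongDual ℂ E) (τ : Fin (j + 1) → V) :
    ((m (simplexOf τ) : ℝ) : ℂ) * codiffOp m L ψ τ (codiffOp m L φ τ)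
      = ∑ v ∈ L τ, ((m (insert v (simplexOf τ)) : ℝ) : ℂ) *
          ψ (Fin.cons v τ) (codiffOp m L φ τ) := by
  by_cases hτ : m (simplexOf τ) = 0
  · simp [codiffOp_eq_zero_of_weight_eq_zero m L φ hτ]
  · rw [codiffOp_apply_apply, Finset.mul_sum]
    refine Finset.sum_congr rfl fun v _ => ?_
    have hτ' : ((m (simplexOf τ) : ℝ) : ℂ) ≠ 0 := by exact_mod_cast hτ
    push_cast
    field_simp

end

theorem stmt14_general {V Γ : Type} [DecidableEq V] [Group Γ] [MulAction Γ V]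
    [MeasurableSpace Γ]
    (μ : MeasureTheory.Measure Γ)
    {E : Type} [NormedAddCommGroup E] [NormedSpace ℂ E]
    (m : Finset V → ℝ)
    (j : ℕ)
    (Rj : Finset (Fin (j + 1) → V))
    (L : (Fin (j + 1) → V) → Finset V)
    (φ : (Fin (j + 2) → V) → E)
    (ψ : (Fin (j + 2) → V) → StrongDual ℂ E) :
    coPair μ m Rj (codiffOp m L φ) (codiffOp m L ψ)
      = (((j + 1).factorial : ℂ))⁻¹ *
        ∑ τ ∈ Rj, ((stabVol μ τ : ℝ) : ℂ)⁻¹ *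
          ∑ v ∈ L τ, ((m (insert v (simplexOf τ)) : ℝ) : ℂ) *
            ψ (Fin.cons v τ)
              (∑ u ∈ L τ,
                ((m (insert u (simplexOf τ)) / m (simplexOf τ) : ℝ) : ℂ) •
                  φ (Fin.cons u τ)) := by
  rw [coPair, Finset.mul_sum]
  refine Finset.sum_congr rfl fun τ _ => ?_
  calc _ = ((j + 1).factorial : ℂ)⁻¹ * ((stabVol μ τ : ℝ) : ℂ)⁻¹ *
        (((m (simplexOf τ) : ℝ) : ℂ) * codiffOp m L ψ τ (codiffOp m L φ τ)) := by
        push_cast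
        ring
    _ = _ := by
        rw [weight_mul_codiffOp_apply_codiffOp, mul_assoc]
        rfl

/-- In Garland's setup, for `k = j+1` (`1 ≤ k ≤ n−1`),
`φ ∈ C^k(X,π)` and `ψ ∈ C^k(X,π̄)`:
`⟨d̄*_{k−1}φ, d*_{k−1}ψ⟩ = (1/k!) Σ_{τ∈Σ(k−1,Γ)} (1/|Γ_τ|) ⟨(M_τ ⊗ id_E)φ_τ, ψ_τ⟩_τ`,
where `M_τ` is the averaging projection onto constants on `ℓ²(V_τ,m_τ)`. -/
theorem stmt14 {V Γ : Type} [DecidableEq V] [Group Γ] [MulAction Γ V]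
    [TopologicalSpace Γ] [IsTopologicalGroup Γ] [LocallyCompactSpace Γ]
    [MeasurableSpace Γ] [BorelSpace Γ]
    (μ : MeasureTheory.Measure Γ) [μ.IsHaarMeasure] [μ.IsMulRightInvariant]
    {E : Type} [NormedAddCommGroup E] [NormedSpace ℂ E] [CompleteSpace E]
    (hrefl : Function.Surjective (NormedSpace.inclusionInDoubleDual ℂ E))
    (K : Set (Finset V)) (n : ℕ)
    (hdown : ∀ σ ∈ K, ∀ τ : Finset V, τ ⊆ σ → τ.Nonempty → τ ∈ K)
    (hpure : ∀ σ ∈ K, ∃ η ∈ K, σ ⊆ η ∧ η.card = n + 1)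
    (hlocfin : ∀ σ, σ ∈ K → ∀ i : ℕ, (cofacesCard K σ i).Finite)
    (hKinv : ∀ (g : Γ), ∀ σ ∈ K, Finset.image (g • ·) σ ∈ K)
    (m : Finset V → ℝ) (hm : IsStdWeight K n m)
    (hproper : ∀ (i : ℕ) (σ : Fin (i + 1) → V), σ ∈ OSimp K i → 0 < stabVol μ σ)
    (π : Γ →* (E →L[ℂ] E)) (hπiso : ∀ (g : Γ) (x : E), ‖π g x‖ = ‖x‖)
    (hπcont : Continuous fun p : Γ × E => π p.1 p.2)
    (j : ℕ) (hj : j + 2 ≤ n)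
    (Rj : Finset (Fin (j + 1) → V)) (hRj : IsReps Γ K j Rj)
    (L : (Fin (j + 1) → V) → Finset V)
    (hL : ∀ (τ : Fin (j + 1) → V) (v : V),
      v ∈ L τ ↔ v ∉ simplexOf τ ∧ insert v (simplexOf τ) ∈ K)
    (φ : (Fin (j + 2) → V) → E) (hφalt : IsAlternating φ)
    (hφeqv : IsEquivariant π φ)
    (ψ : (Fin (j + 2) → V) → StrongDual ℂ E) (hψalt : IsAlternating ψ)
    (hψeqv : IsDualEquivariant π ψ) :
    coPair μ m Rj (codiffOp m L φ) (codiffOp m L ψ)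
      = (((j + 1).factorial : ℂ))⁻¹ *
        ∑ τ ∈ Rj, ((stabVol μ τ : ℝ) : ℂ)⁻¹ *
          ∑ v ∈ L τ, ((m (insert v (simplexOf τ)) : ℝ) : ℂ) *
            ψ (Fin.cons v τ)
              (∑ u ∈ L τ,
                ((m (insert u (simplexOf τ)) / m (simplexOf τ) : ℝ) : ℂ) •
                  φ (Fin.cons u τ)) :=
  stmt14_general μ m j Rj L φ ψ
end
end
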